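/- arXiv:1711.08650 — 3 statements merged into one kernel-verified Lean document; each statement's English description precedes it below -/
import Mathlib

section
/- There is no M ∈ GL₂(ℤ) with trace 0 and determinant 1 satisfying M A = A⁻¹ M when A ∈ GL₂(ℤ) has tr(A)² < 4 and det(A) = 1 and A ≠ ±I; consequently, ℤ² ⋊_A ℤ has the R∞ property for every A ∈ GL₂(ℤ) with non-real complex eigenvalues. -/
/-- The twisted conjugacy relation determined by an endomorphism `φ`. -/
def twistedRel {G : Type*} [Group G] (φ : G →* G) (x y : G) : Prop :=
  ∃ z : G, x = z * y * (φ z)⁻¹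

/-- The setoid of `φ`-twisted conjugacy. -/
def twistedSetoid {G : Type*} [Group G] (φ : G →* G) : Setoid G :=
  ⟨twistedRel φ, by
    constructor
    · intro x; exact ⟨1, by simp⟩
    · rintro x y ⟨z, rfl⟩
      exact ⟨z⁻¹, by simp [mul_assoc]⟩
    · rintro x y w ⟨z₁, rfl⟩ ⟨z₂, hz₂⟩
      subst hz₂
      exact ⟨z₁ * z₂, by simp [mul_assoc]⟩⟩

/-- The action of `ℤ` on `ℤⁿ` (written multiplicatively) through an automorphism `e`,
defining the semidirect product `ℤⁿ ⋊ ℤ`. -/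
def zAction {V : Type*} [AddCommGroup V] (e : V ≃+ V) :
    Multiplicative ℤ →* MulAut (Multiplicative V) :=
  zpowersHom (MulAut (Multiplicative V)) (AddEquiv.toMultiplicative e)

/-- A group has the `R∞` property if every automorphism has infinitely many twisted
conjugacy classes. -/
def hasRinf (G : Type*) [Group G] : Prop :=
  ∀ φ : G ≃* G, Infinite (Quotient (twistedSetoid φ.toMonoidHom))

/-!
Every homomorphism `ℤ² ⋊_A ℤ → ℤ` kills `ℤ²`, because `det (A - 1) = 2 - tr A ≠ 0`; hence an
automorphism `φ` induces `±1` on the quotient `ℤ`. If it induces `+1`, the projection to `ℤ` is a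
twisted-conjugacy invariant with infinite image. If it induces `-1`, then `φ` preserves `ℤ²` and
acts on it by some `M ∈ GL₂(ℤ)` with `M A = A⁻¹ M`, and two elements of `ℤ²` that are twisted
conjugate are so by an element of `ℤ²`. Such an `M` is traceless with `det M = -1`: if
`det M = 1`, then `M` and the traceless part `2A - tr A` anticommute and square to negative
scalars, so they would span a definite quaternion algebra inside `M₂(ℝ)`. Hence `M² = 1`, some
nonzero functional `L : ℤ² → ℤ` satisfies `L ∘ M = L`, and `L` separates infinitely many twisted
classes in `ℤ²`.
-/

open Matrix SemidirectProduct Multiplicative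

section Matrix
variable {R : Type*} [CommRing R]

theorem Matrix.det_sub_one_fin_two (A : Matrix (Fin 2) (Fin 2) R) :
    (A - 1).det = 1 - A.trace + A.det := by
  simp only [det_fin_two, trace_fin_two, sub_apply, one_apply_eq, one_apply_ne, ne_eq,
    Fin.zero_eq_one_iff, Fin.one_eq_zero_iff, OfNat.ofNat_ne_one, not_false_eq_true, sub_zero]
  ring

theorem Matrix.mul_self_eq_one_of_trace_eq_zero_of_det_eq_neg_one {M : Matrix (Fin 2) (Fin 2) R}
    (htr : M.trace = 0) (hdet : M.det = -1) : M * M = 1 := by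
  rw [trace_fin_two] at htr
  rw [det_fin_two] at hdet
  ext i j
  fin_cases i <;> fin_cases j <;>
    simp only [Fin.zero_eta, Fin.mk_one, Fin.isValue, mul_apply, Fin.sum_univ_two, one_apply_eq,
      one_apply_ne, ne_eq, zero_ne_one, one_ne_zero, not_false_eq_true] <;> grind

theorem Matrix.exists_vecMul_eq_self_of_mul_self_eq_one {n : Type*} [Fintype n] [DecidableEq n]
    {S : Type*} [Ring S] {M : Matrix n n S} (hM : M * M = 1) (hne : M ≠ -1) :
    ∃ x ≠ 0, x ᵥ* M = x := by
  have hM1 : M + 1 ≠ 0 := fun h => hne (eq_neg_of_add_eq_zero_left h)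
  obtain ⟨i, hi⟩ : ∃ i, (M + 1).row i ≠ 0 := by
    by_contra! h
    exact hM1 (Matrix.ext fun i j => congr_fun (h i) j)
  refine ⟨(M + 1).row i, hi, ?_⟩
  rw [← single_one_vecMul, vecMul_vecMul, add_mul, hM, one_mul, add_comm]

theorem AddMonoidHom.eq_zero_of_map_mulVec_eq_self {n G : Type*} [Fintype n] [DecidableEq n]
    [AddCommGroup G] [IsAddTorsionFree G] {A : Matrix n n ℤ} (hA : (A - 1).det ≠ 0)
    (F : (n → ℤ) →+ G) (hF : ∀ v, F (A *ᵥ v) = F v) : F = 0 := by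
  refine AddMonoidHom.ext fun v => ?_
  have hker : F ((A - 1) *ᵥ (A - 1).adjugate *ᵥ v) = 0 := by
    rw [sub_mulVec, one_mulVec, map_sub, hF, sub_self]
  rw [mulVec_mulVec, mul_adjugate, smul_mulVec, one_mulVec, map_zsmul] at hker
  exact (IsAddTorsionFree.zsmul_eq_zero_iff_right hA).1 hker

end Matrix

section OrderedRing
variable {R : Type*} [CommRing R] [LinearOrder R] [IsStrictOrderedRing R]
  {A M : Matrix (Fin 2) (Fin 2) R}

theorem Matrix.trace_eq_zero_of_mul_eq_adjugate_mul (hdet : A.det = 1) (htr : A.trace ^ 2 < 4)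
    (h : M * A = A.adjugate * M) : M.trace = 0 := by
  have h01 := congr_fun₂ h 0 1
  have h10 := congr_fun₂ h 1 0
  simp only [mul_apply, Fin.sum_univ_two, adjugate_fin_two, of_apply, cons_val', cons_val_zero,
    cons_val_one, empty_val', cons_val_fin_one] at h01 h10
  rw [det_fin_two] at hdet
  rw [trace_fin_two] at htr ⊢
  by_contra hM
  have hq : A 0 1 = 0 :=
    (mul_eq_zero.1 (by linear_combination h01 : A 0 1 * (M 0 0 + M 1 1) = 0)).resolve_right hM
  have hr : A 1 0 = 0 :=
    (mul_eq_zero.1 (by linear_combination h10 : A 1 0 * (M 0 0 + M 1 1) = 0)).resolve_right hM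
  rw [hq, hr] at hdet
  nlinarith [sq_nonneg (A 0 0 - A 1 1)]

theorem Matrix.det_ne_one_of_mul_eq_adjugate_mul (hdet : A.det = 1) (htr : A.trace ^ 2 < 4)
    (h : M * A = A.adjugate * M) : M.det ≠ 1 := by
  intro hM
  have htrM := trace_eq_zero_of_mul_eq_adjugate_mul hdet htr h
  have h00 := congr_fun₂ h 0 0
  simp only [mul_apply, Fin.sum_univ_two, adjugate_fin_two, of_apply, cons_val', cons_val_zero,
    cons_val_one, empty_val', cons_val_fin_one] at h00
  rw [det_fin_two] at hdet hM
  rw [trace_fin_two] at htr htrM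
  have hd : M 1 1 = -M 0 0 := by linear_combination htrM
  rw [hd] at hM
  have horth : M 0 0 * (A 0 0 - A 1 1) + M 0 1 * A 1 0 + M 1 0 * A 0 1 = 0 := by
    linear_combination h00
  have hdisc : (A 0 0 - A 1 1) ^ 2 < -4 * (A 0 1 * A 1 0) := by linear_combination htr - 4 * hdet
  have hqr : A 0 1 * A 1 0 < 0 := by nlinarith [sq_nonneg (A 0 0 - A 1 1)]
  have hbound := mul_le_mul_of_nonneg_left hdisc.le (sq_nonneg (M 0 0))
  have hsq : (M 0 0 * (A 0 0 - A 1 1)) ^ 2 = (M 0 1 * A 1 0 + M 1 0 * A 0 1) ^ 2 := by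
    linear_combination (M 0 0 * (A 0 0 - A 1 1) - (M 0 1 * A 1 0 + M 1 0 * A 0 1)) * horth
  nlinarith [sq_nonneg (M 0 1 * A 1 0 - M 1 0 * A 0 1), congrArg (· * (A 0 1 * A 1 0)) hM]

end OrderedRing

theorem Matrix.exists_vecMul_eq_self_of_mul_eq_adjugate_mul {A M : Matrix (Fin 2) (Fin 2) ℤ}
    (hdet : A.det = 1) (htr : A.trace ^ 2 < 4) (h : M * A = A.adjugate * M) (hM : IsUnit M.det) :
    ∃ w ≠ 0, w ᵥ* M = w := by
  have htrM := trace_eq_zero_of_mul_eq_adjugate_mul hdet htr h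
  have hdetM : M.det = -1 :=
    (Int.isUnit_iff.1 hM).resolve_left (det_ne_one_of_mul_eq_adjugate_mul hdet htr h)
  refine exists_vecMul_eq_self_of_mul_self_eq_one
    (mul_self_eq_one_of_trace_eq_zero_of_det_eq_neg_one htrM hdetM) fun hM1 => ?_
  rw [hM1, trace_neg, trace_one] at htrM
  norm_num at htrM

theorem exists_dotProduct_map_eq_of_map_mulVec_eq_adjugate_mulVec
    {A : Matrix (Fin 2) (Fin 2) ℤ} (hdet : A.det = 1) (htr : A.trace ^ 2 < 4)
    (ψ : (Fin 2 → ℤ) ≃+ (Fin 2 → ℤ)) (hψ : ∀ v, ψ (A *ᵥ v) = A.adjugate *ᵥ ψ v) :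
    ∃ w ≠ 0, ∀ v, w ⬝ᵥ ψ v = w ⬝ᵥ v := by
  set M := LinearMap.toMatrix' (ψ.toIntLinearEquiv : (Fin 2 → ℤ) →ₗ[ℤ] Fin 2 → ℤ)
  have hMv : ∀ v, M *ᵥ v = ψ v := LinearMap.toMatrix'_mulVec _
  have hMA : M * A = A.adjugate * M :=
    ext_iff_mulVec.2 fun v => by rw [← mulVec_mulVec, ← mulVec_mulVec, hMv, hMv, hψ]
  have hunit : IsUnit M.det := by
    rw [LinearMap.det_toMatrix']
    exact LinearEquiv.isUnit_det' _
  obtain ⟨w, hw0, hw⟩ := exists_vecMul_eq_self_of_mul_eq_adjugate_mul hdet htr hMA hunit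
  exact ⟨w, hw0, fun v => by rw [← hMv, dotProduct_mulVec, hw]⟩

section TwistedConjugacy
variable {G H : Type*} [Group G] [CommGroup H] {φ : G →* G} {π : G →* H}

theorem map_eq_of_twistedRel (hπ : ∀ g, π (φ g) = π g) {x y : G} (h : twistedRel φ x y) :
    π x = π y := by
  obtain ⟨z, rfl⟩ := h
  rw [map_mul, map_mul, map_inv, hπ, mul_inv_cancel_comm]

theorem infinite_quotient_twistedSetoid_of_map_eq [Infinite H] (hsurj : Function.Surjective π)
    (hπ : ∀ g, π (φ g) = π g) : Infinite (Quotient (twistedSetoid φ)) :=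
  Infinite.of_surjective _ (Quotient.lift_surjective π (fun _ _ => map_eq_of_twistedRel hπ) hsurj)

theorem exists_twistedRel_of_map_eq_inv [IsMulTorsionFree H] (hπ : ∀ g, π (φ g) = (π g)⁻¹)
    {x y : G} (hxy : π x = π y) (h : twistedRel φ x y) :
    ∃ z, π z = 1 ∧ x = z * y * (φ z)⁻¹ := by
  obtain ⟨z, rfl⟩ := h
  refine ⟨z, sq_eq_one.1 ?_, rfl⟩
  rw [map_mul, map_mul, map_inv, hπ, inv_inv] at hxy
  rwa [mul_right_comm, ← sq, mul_eq_right] at hxy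

end TwistedConjugacy

namespace SemidirectProduct
variable {N K : Type*} [Group N] [Group K] {α : K →* MulAut N}

theorem inl_left_of_right_eq_one {g : N ⋊[α] K} (h : g.right = 1) : inl g.left = g := by
  ext <;> simp [h]

theorem mul_inl_mul_inv {N : Type*} [CommGroup N] {α : K →* MulAut N} (g : N ⋊[α] K) (n : N) :
    g * inl n * g⁻¹ = inl (α g.right n) := by
  ext <;> simp [mul_comm]

def restrictInl (φ : N ⋊[α] K ≃* N ⋊[α] K) (hφ : ∀ g, (φ g).right = 1 ↔ g.right = 1) :
    N ≃* N where
  toFun n := (φ (inl n)).left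
  invFun n := (φ.symm (inl n)).left
  left_inv n := by
    show (φ.symm (inl (φ (inl n)).left)).left = n
    rw [inl_left_of_right_eq_one ((hφ _).2 rfl), MulEquiv.symm_apply_apply, left_inl]
  right_inv n := by
    have : (φ.symm (inl n)).right = 1 := by simpa using (hφ (φ.symm (inl n))).1
    show (φ (inl (φ.symm (inl n)).left)).left = n
    rw [inl_left_of_right_eq_one this, MulEquiv.apply_symm_apply, left_inl]
  map_mul' m n := by
    rw [map_mul, map_mul, mul_left, (hφ _).2 rfl, map_one, MulAut.one_apply]

theorem inl_restrictInl (φ : N ⋊[α] K ≃* N ⋊[α] K) (hφ : ∀ g, (φ g).right = 1 ↔ g.right = 1)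
    (n : N) : inl (restrictInl φ hφ n) = φ (inl n) :=
  inl_left_of_right_eq_one ((hφ _).2 rfl)

end SemidirectProduct

theorem exists_addEquiv_map_inl_ofAdd_of_rightHom_map_eq_inv {V K : Type*} [AddCommGroup V]
    [Group K] {α : K →* MulAut (Multiplicative V)}
    (φ : Multiplicative V ⋊[α] K ≃* Multiplicative V ⋊[α] K)
    (hφ : ∀ g, rightHom (φ g) = (rightHom g)⁻¹) :
    ∃ ψ : V ≃+ V, ∀ v, φ (inl (ofAdd v)) = inl (ofAdd (ψ v)) := by
  have hpres : ∀ g, (φ g).right = 1 ↔ g.right = 1 := fun g => by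
    change rightHom (φ g) = 1 ↔ rightHom g = 1
    rw [hφ, inv_eq_one]
  exact ⟨AddEquiv.toMultiplicative.symm (restrictInl φ hpres), fun v =>
    (inl_restrictInl φ hpres (ofAdd v)).symm⟩

theorem infinite_quotient_twistedSetoid_of_rightHom_map_eq_inv {V K : Type*} [AddCommGroup V]
    [CommGroup K] [IsMulTorsionFree K] {α : K →* MulAut (Multiplicative V)}
    (φ : Multiplicative V ⋊[α] K ≃* Multiplicative V ⋊[α] K)
    (hφ : ∀ g, rightHom (φ g) = (rightHom g)⁻¹) {ψ : V → V}
    (hψ : ∀ v, φ (inl (ofAdd v)) = inl (ofAdd (ψ v))) (L : V →+ ℤ) (hL : ∀ v, L (ψ v) = L v)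
    {w : V} (hw : L w ≠ 0) : Infinite (Quotient (twistedSetoid φ.toMonoidHom)) := by
  refine Infinite.of_injective (fun j : ℤ => Quotient.mk _ (inl (ofAdd (j • w))))
    fun j k hjk => ?_
  obtain ⟨z, hz1, hz⟩ := exists_twistedRel_of_map_eq_inv (π := rightHom) hφ
    (by rw [rightHom_inl, rightHom_inl]) (Quotient.exact hjk)
  rw [← inl_left_of_right_eq_one hz1, MulEquiv.coe_toMonoidHom, ← ofAdd_toAdd z.left, hψ,
    ← map_inv, ← map_mul, ← map_mul, inl_inj, ← ofAdd_neg, ← ofAdd_add, ← ofAdd_add,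
    EmbeddingLike.apply_eq_iff_eq] at hz
  have hLz := congrArg L hz
  rw [map_add, map_add, map_neg, hL, map_zsmul, map_zsmul, smul_eq_mul, smul_eq_mul] at hLz
  exact mul_right_cancel₀ hw (by linarith)

section ZAction
variable {V : Type*} [AddCommGroup V] (e : V ≃+ V)

theorem zAction_ofAdd_one_apply (v : V) : zAction e (ofAdd 1) (ofAdd v) = ofAdd (e v) := by
  simp [zAction]

theorem zAction_ofAdd_neg_one_apply (v : V) :
    zAction e (ofAdd (-1)) (ofAdd v) = ofAdd (e.symm v) := by
  simp [zAction]

theorem map_inl_ofAdd_apply {H : Type*} [CommGroup H]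
    (f : Multiplicative V ⋊[zAction e] Multiplicative ℤ →* H) (v : V) :
    f (inl (ofAdd (e v))) = f (inl (ofAdd v)) := by
  rw [← zAction_ofAdd_one_apply, inl_aut, map_inv inr, map_mul, map_mul, map_inv,
    mul_inv_cancel_comm]

theorem eq_zpow_toAdd_rightHom (hfix : ∀ F : V →+ ℤ, (∀ v, F (e v) = F v) → F = 0)
    (f : Multiplicative V ⋊[zAction e] Multiplicative ℤ →* Multiplicative ℤ) (g) :
    f g = f (inr (ofAdd 1)) ^ toAdd (rightHom g) := by
  have hinl : ∀ n, f (inl n) = 1 := fun n =>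
    congr(ofAdd ($(hfix (AddMonoidHom.toMultiplicative.symm (f.comp inl))
      (map_inl_ofAdd_apply e f)) (toAdd n)))
  calc f g = f (inr g.right) := by
        conv_lhs => rw [← inl_left_mul_inr_right g]
        rw [map_mul, hinl, one_mul]
    _ = f (inr (ofAdd 1) ^ toAdd g.right) := by
        rw [← map_zpow, ← ofAdd_zsmul, smul_eq_mul, mul_one, ofAdd_toAdd]
    _ = _ := map_zpow f _ _

theorem rightHom_map_eq_or_eq_inv (hfix : ∀ F : V →+ ℤ, (∀ v, F (e v) = F v) → F = 0)
    (φ : Multiplicative V ⋊[zAction e] Multiplicative ℤ ≃*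
      Multiplicative V ⋊[zAction e] Multiplicative ℤ) :
    (∀ g, rightHom (φ g) = rightHom g) ∨ ∀ g, rightHom (φ g) = (rightHom g)⁻¹ := by
  set c := rightHom (φ (inr (ofAdd 1)))
  have hc : ∀ g, rightHom (φ g) = c ^ toAdd (rightHom g) :=
    eq_zpow_toAdd_rightHom e hfix (rightHom.comp φ.toMonoidHom)
  obtain ⟨k, hk⟩ : ∃ k : ℤ, toAdd c * k = 1 := by
    refine ⟨toAdd (rightHom (φ.symm (inr (ofAdd 1)))), ?_⟩
    have := congrArg toAdd (hc (φ.symm (inr (ofAdd 1))))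
    rwa [MulEquiv.apply_symm_apply, rightHom_inr, toAdd_ofAdd, toAdd_zpow, smul_eq_mul,
      mul_comm, eq_comm] at this
  rcases Int.eq_one_or_neg_one_of_mul_eq_one hk with h | h
  · refine .inl fun g => ?_
    rw [hc, ← ofAdd_toAdd c, h, ← ofAdd_zsmul, smul_eq_mul, mul_one, ofAdd_toAdd]
  · refine .inr fun g => ?_
    rw [hc, ← ofAdd_toAdd c, h, ← ofAdd_zsmul, smul_eq_mul, mul_neg_one, ofAdd_neg, ofAdd_toAdd]

theorem apply_apply_eq_symm_apply_of_rightHom_map_eq_inv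
    {φ : Multiplicative V ⋊[zAction e] Multiplicative ℤ ≃*
      Multiplicative V ⋊[zAction e] Multiplicative ℤ}
    (hφ : ∀ g, rightHom (φ g) = (rightHom g)⁻¹) {ψ : V → V}
    (hψ : ∀ v, φ (inl (ofAdd v)) = inl (ofAdd (ψ v))) (v : V) :
    ψ (e v) = e.symm (ψ v) := by
  have h := congrArg φ (inl_aut (φ := zAction e) (ofAdd 1) (ofAdd v))
  have hright : (φ (inr (ofAdd 1))).right = ofAdd (-1) := hφ _
  rw [zAction_ofAdd_one_apply, hψ, map_inv inr, map_mul, map_mul, map_inv, hψ, mul_inl_mul_inv,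
    hright, zAction_ofAdd_neg_one_apply, inl_inj, EmbeddingLike.apply_eq_iff_eq] at h
  exact h

end ZAction

theorem rinf_of_complex_eigenvalues_general (A : Matrix (Fin 2) (Fin 2) ℤ)
    (hdet : A.det = 1) (htr : A.trace ^ 2 < 4)
    (e : (Fin 2 → ℤ) ≃+ (Fin 2 → ℤ)) (he : ∀ v, e v = A.mulVec v) :
    (¬ ∃ M : Matrix (Fin 2) (Fin 2) ℤ,
        M.det = 1 ∧ M.trace = 0 ∧ M * A = A⁻¹ * M) ∧
    hasRinf (Multiplicative (Fin 2 → ℤ) ⋊[zAction e] Multiplicative ℤ) := by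
  have hinv : A⁻¹ = A.adjugate := by rw [inv_def, hdet, Ring.inverse_one, one_smul]
  refine ⟨fun ⟨M, hM, _, hMA⟩ => det_ne_one_of_mul_eq_adjugate_mul hdet htr (hinv ▸ hMA) hM,
    fun φ => ?_⟩
  have hfix : ∀ F : (Fin 2 → ℤ) →+ ℤ, (∀ v, F (e v) = F v) → F = 0 := fun F hF =>
    F.eq_zero_of_map_mulVec_eq_self (by rw [det_sub_one_fin_two, hdet]; nlinarith)
      fun v => by rw [← he, hF]
  rcases rightHom_map_eq_or_eq_inv e hfix φ with hφ | hφ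
  · exact infinite_quotient_twistedSetoid_of_map_eq rightHom_surjective hφ
  · obtain ⟨ψ, hψ⟩ := exists_addEquiv_map_inl_ofAdd_of_rightHom_map_eq_inv φ hφ
    have he_symm : ∀ v, e.symm v = A.adjugate *ᵥ v := fun v => e.symm_apply_eq.2 <| by
      rw [he, mulVec_mulVec, mul_adjugate, hdet, one_smul, one_mulVec]
    obtain ⟨w, hw0, hw⟩ := exists_dotProduct_map_eq_of_map_mulVec_eq_adjugate_mulVec hdet htr ψ
      fun v => by rw [← he, apply_apply_eq_symm_apply_of_rightHom_map_eq_inv e hφ hψ, he_symm]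
    exact infinite_quotient_twistedSetoid_of_rightHom_map_eq_inv φ hφ hψ
      (AddMonoidHom.mk' (w ⬝ᵥ ·) (dotProduct_add w)) hw
      (mt dotProduct_self_eq_zero.1 hw0 : w ⬝ᵥ w ≠ 0)

/-- For `A ∈ GL₂(ℤ)` with non-real complex eigenvalues (`det A = 1`, `tr(A)² < 4`,
`A ≠ ±I`), there is no `M ∈ SL₂(ℤ)` of trace `0` with `M A = A⁻¹ M`; consequently
`ℤ² ⋊_A ℤ` has the `R∞` property. -/
theorem rinf_of_complex_eigenvalues (A : Matrix (Fin 2) (Fin 2) ℤ)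
    (hdet : A.det = 1) (htr : A.trace ^ 2 < 4) (hA1 : A ≠ 1) (hA2 : A ≠ -1)
    (e : (Fin 2 → ℤ) ≃+ (Fin 2 → ℤ)) (he : ∀ v, e v = A.mulVec v) :
    (¬ ∃ M : Matrix (Fin 2) (Fin 2) ℤ,
        M.det = 1 ∧ M.trace = 0 ∧ M * A = A⁻¹ * M) ∧
    hasRinf (Multiplicative (Fin 2 → ℤ) ⋊[zAction e] Multiplicative ℤ) :=
  rinf_of_complex_eigenvalues_general A hdet htr e he
end

section
/- Let A ∈ GL₃(ℤ) have no eigenvalue equal to 1 or −1. Then no M ∈ GL₃(ℤ) satisfies M A = A⁻¹ M, and the group ℤ³ ⋊_A ℤ has the R∞ property. -/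
open SemidirectProduct Matrix

namespace Matrix

variable {n R : Type*} [Fintype n] [DecidableEq n] [CommRing R]

theorem det_sq_eq_one_of_mul_mul_eq {A M : Matrix n n R} (hM : IsUnit M.det)
    (h : A * M * A = M) : A.det ^ 2 = 1 := by
  have hdet := congrArg det h
  rw [det_mul, det_mul] at hdet
  exact hM.mul_left_cancel (by linear_combination hdet)

variable [IsDomain R] [NeZero (2 : R)]

theorem isRoot_charpoly_det_of_mul_mul_eq (hn : Odd (Fintype.card n)) {A M : Matrix n n R}
    (hM : IsUnit M.det) (h : A * M * A = M) : A.charpoly.IsRoot A.det := by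
  set d := A.det
  have hd : d ^ 2 = 1 := det_sq_eq_one_of_mul_mul_eq hM h
  set X := scalar n d - A
  have hX : X = d • 1 - A := by rw [smul_one_eq_diagonal]; rfl
  have hconj : A * M * X = -(d • X) * M := by
    rw [hX, mul_sub, h, smul_sub, smul_smul, ← sq, hd, one_smul, neg_sub, sub_mul,
      mul_smul_comm, mul_one, smul_mul_assoc, one_mul]
  have hdet := congrArg det hconj
  rw [det_mul, det_mul, det_mul, det_neg, det_smul, hn.neg_one_pow] at hdet
  have hdn : d ^ Fintype.card n = d := by
    obtain ⟨k, hk⟩ := hn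
    rw [hk, pow_succ, pow_mul, hd, one_pow, one_mul]
  rw [hdn] at hdet
  have hdM : IsUnit (d * M.det) := (IsUnit.of_pow_eq_one hd two_ne_zero).mul hM
  have : (2 * (d * M.det)) * X.det = 0 := by linear_combination hdet
  rw [Polynomial.IsRoot, eval_charpoly]
  exact (mul_eq_zero.mp this).resolve_left (mul_ne_zero two_ne_zero hdM.ne_zero)

theorem det_one_sub_eq_zero_or_det_one_add_eq_zero_of_mul_mul_eq
    (hn : Odd (Fintype.card n)) {A M : Matrix n n R} (hM : IsUnit M.det) (h : A * M * A = M) :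
    (1 - A).det = 0 ∨ (1 + A).det = 0 := by
  have hroot := (isRoot_charpoly_det_of_mul_mul_eq hn hM h).eq_zero
  rw [eval_charpoly] at hroot
  have hd := det_sq_eq_one_of_mul_mul_eq hM h
  rw [sq, mul_self_eq_one_iff] at hd
  rcases hd with hd | hd
  · left
    rwa [hd, map_one] at hroot
  · right
    rw [hd, map_neg, map_one, ← neg_add', det_neg] at hroot
    exact (mul_eq_zero.mp hroot).resolve_left (pow_ne_zero _ (neg_ne_zero.mpr one_ne_zero))

end Matrix

theorem AddMonoidHom.eq_zero_of_map_mulVec_eq {n : Type*} [Fintype n] [DecidableEq n]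
    {A : Matrix n n ℤ} (hA : (1 - A).det ≠ 0) (g : (n → ℤ) →+ ℤ)
    (hg : ∀ v, g (A *ᵥ v) = g v) : g = 0 := by
  refine AddMonoidHom.ext fun v => ?_
  have hker : ∀ w, g ((1 - A) *ᵥ w) = 0 := fun w => by
    rw [sub_mulVec, one_mulVec, map_sub, hg, sub_self]
  have : (1 - A).det • g v = 0 := by
    rw [← map_zsmul, ← hker ((1 - A).adjugate *ᵥ v), mulVec_mulVec, mul_adjugate, smul_mulVec,
      one_mulVec]
  simpa [hA] using this

theorem MonoidHom.eq_id_or_eq_invMonoidHom_of_surjective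
    (ψ : Multiplicative ℤ →* Multiplicative ℤ) (hψ : Function.Surjective ψ) :
    ψ = MonoidHom.id _ ∨ ψ = invMonoidHom := by
  obtain ⟨x, hx⟩ := hψ (Multiplicative.ofAdd 1)
  rw [ψ.apply_mint] at hx
  have hmul : (ψ (Multiplicative.ofAdd 1)).toAdd * x.toAdd = 1 := by
    rw [mul_comm, ← smul_eq_mul, ← toAdd_zpow, hx, toAdd_ofAdd]
  rcases Int.eq_one_or_neg_one_of_mul_eq_one hmul with h | h
  · exact .inl (MonoidHom.ext_mint (by rw [← ofAdd_toAdd (ψ _), h]; rfl))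
  · exact .inr (MonoidHom.ext_mint (by rw [← ofAdd_toAdd (ψ _), h]; rfl))

theorem infinite_quotient_twistedSetoid_of_comp_eq {G Q : Type*} [Group G] [CommGroup Q]
    [Infinite Q] (φ : G →* G) (ψ : G →* Q) (hψ : Function.Surjective ψ)
    (h : ψ.comp φ = ψ) :
    Infinite (Quotient (twistedSetoid φ)) := by
  have hinv : ∀ z, ψ (φ z) = ψ z := fun z => DFunLike.congr_fun h z
  refine Infinite.of_surjective (Quotient.lift ψ ?_) fun q => ?_
  · rintro _ b ⟨z, rfl⟩
    rw [map_mul, map_mul, map_inv, hinv, mul_right_comm, mul_inv_cancel, one_mul]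
  · obtain ⟨x, rfl⟩ := hψ q
    exact ⟨Quotient.mk _ x, rfl⟩

namespace SemidirectProduct

variable {N G : Type*} [Group N] [Group G] {ϕ : G →* MulAut N}

theorem eq_comp_rightHom_of_comp_inl_eq_one {H : Type*} [Group H] (f : N ⋊[ϕ] G →* H)
    (hf : f.comp inl = 1) : f = (f.comp inr).comp rightHom :=
  hom_ext (by rw [hf, MonoidHom.comp_assoc, rightHom_comp_inl, MonoidHom.comp_one])
    (by rw [MonoidHom.comp_assoc, rightHom_comp_inr, MonoidHom.comp_id])

theorem map_inl_aut {Q : Type*} [CommGroup Q] (f : N ⋊[ϕ] G →* Q) (g : G) (n : N) :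
    f (inl (ϕ g n)) = f (inl n) := by
  rw [inl_aut, map_mul, map_mul, map_inv inr, map_inv f, mul_inv_cancel_comm]

theorem inl_left_of_right_eq_one_s15 {x : N ⋊[ϕ] G} (hx : x.right = 1) : inl x.left = x := by
  ext <;> simp [hx]

theorem mul_inl_mul_inv_s15 {N : Type*} [CommGroup N] {ϕ : G →* MulAut N} (x : N ⋊[ϕ] G) (n : N) :
    x * inl n * x⁻¹ = inl (ϕ x.right n) := by
  ext <;> simp [mul_comm]

variable (φ : N ⋊[ϕ] G ≃* N ⋊[ϕ] G) (hφ : ∀ n, (φ (inl n)).right = 1)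
  (hφ' : ∀ n, (φ.symm (inl n)).right = 1)

def restrictLeft : N ≃* N where
  toFun n := (φ (inl n)).left
  invFun n := (φ.symm (inl n)).left
  left_inv n := by simp [inl_left_of_right_eq_one_s15 (hφ n)]
  right_inv n := by simp [inl_left_of_right_eq_one_s15 (hφ' n)]
  map_mul' a b := by simp [mul_left, hφ]

theorem inl_restrictLeft (n : N) : inl (restrictLeft φ hφ hφ' n) = φ (inl n) :=
  inl_left_of_right_eq_one_s15 (hφ n)

theorem restrictLeft_aut {N : Type*} [CommGroup N] {ϕ : G →* MulAut N}
    (φ : N ⋊[ϕ] G ≃* N ⋊[ϕ] G) (hφ : ∀ n, (φ (inl n)).right = 1)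
    (hφ' : ∀ n, (φ.symm (inl n)).right = 1) (g : G) (n : N) :
    restrictLeft φ hφ hφ' (ϕ g n) = ϕ (φ (inr g)).right (restrictLeft φ hφ hφ' n) := by
  refine inl_injective (φ := ϕ) ?_
  rw [inl_restrictLeft, inl_aut, map_mul, map_mul, map_inv inr, map_inv φ,
    ← inl_restrictLeft φ hφ hφ', mul_inl_mul_inv_s15]

end SemidirectProduct

theorem LinearEquiv.exists_isUnit_det_mulVec_eq {n R : Type*} [Fintype n] [DecidableEq n]
    [CommRing R] (m : (n → R) ≃ₗ[R] (n → R)) :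
    ∃ M : Matrix n n R, IsUnit M.det ∧ ∀ v, M *ᵥ v = m v :=
  ⟨LinearMap.toMatrix' m, by rw [LinearMap.det_toMatrix']; exact m.isUnit_det',
    LinearMap.toMatrix'_mulVec _⟩

theorem zAction_ofAdd_one {V : Type*} [AddCommGroup V] (e : V ≃+ V) :
    zAction e (Multiplicative.ofAdd 1) = AddEquiv.toMultiplicative e := by
  simp [zAction]

theorem zAction_ofAdd_neg_one {V : Type*} [AddCommGroup V] (e : V ≃+ V) :
    zAction e (Multiplicative.ofAdd (-1)) = AddEquiv.toMultiplicative e.symm := by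
  rfl

section

variable {n : Type*} [Fintype n] [DecidableEq n] {A : Matrix n n ℤ}
  {e : (n → ℤ) ≃+ (n → ℤ)}

theorem comp_inl_eq_one_of_det_one_sub_ne_zero (he : ∀ v, e v = A *ᵥ v)
    (h1 : (1 - A).det ≠ 0)
    (F : Multiplicative (n → ℤ) ⋊[zAction e] Multiplicative ℤ →* Multiplicative ℤ) :
    F.comp inl = 1 := by
  have hg := AddMonoidHom.eq_zero_of_map_mulVec_eq h1
    (AddMonoidHom.toMultiplicative.symm (F.comp inl)) fun v => by
      simpa [← he, zAction_ofAdd_one] using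
        map_inl_aut F (Multiplicative.ofAdd 1) (Multiplicative.ofAdd v)
  rw [← AddMonoidHom.toMultiplicative.apply_symm_apply (F.comp inl), hg]
  rfl

theorem exists_mul_mul_eq_of_right_map_inr_eq (he : ∀ v, e v = A *ᵥ v)
    (φ : Multiplicative (n → ℤ) ⋊[zAction e] Multiplicative ℤ ≃*
      Multiplicative (n → ℤ) ⋊[zAction e] Multiplicative ℤ)
    (hφ : ∀ v, (φ (inl v)).right = 1) (hφ' : ∀ v, (φ.symm (inl v)).right = 1)
    (h : (φ (inr (Multiplicative.ofAdd 1))).right = Multiplicative.ofAdd (-1)) :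
    ∃ M : Matrix n n ℤ, IsUnit M.det ∧ A * M * A = M := by
  set m := AddEquiv.toMultiplicative.symm (restrictLeft φ hφ hφ')
  have hm : ∀ v, m (e v) = e.symm (m v) := fun v => by
    have := restrictLeft_aut φ hφ hφ' (Multiplicative.ofAdd 1) (Multiplicative.ofAdd v)
    rw [h, zAction_ofAdd_one, zAction_ofAdd_neg_one] at this
    exact this
  obtain ⟨M, hM, hMv⟩ := m.toIntLinearEquiv.exists_isUnit_det_mulVec_eq
  refine ⟨M, hM, mulVec_injective (funext fun v => ?_)⟩
  simp only [← mulVec_mulVec, ← he, hMv]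
  exact (congrArg e (hm v)).trans (e.apply_symm_apply _)

theorem hasRinf_semidirectProduct_zAction (hn : Odd (Fintype.card n)) (he : ∀ v, e v = A *ᵥ v)
    (h1 : (1 - A).det ≠ 0) (h2 : (1 + A).det ≠ 0) :
    hasRinf (Multiplicative (n → ℤ) ⋊[zAction e] Multiplicative ℤ) := by
  intro φ
  have hvanish := comp_inl_eq_one_of_det_one_sub_ne_zero he h1
  have hφ : ∀ v, (φ (inl v)).right = 1 := fun v =>
    DFunLike.congr_fun (hvanish (rightHom.comp φ.toMonoidHom)) v
  have hφ' : ∀ v, (φ.symm (inl v)).right = 1 := fun v =>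
    DFunLike.congr_fun (hvanish (rightHom.comp φ.symm.toMonoidHom)) v
  obtain ⟨ψ, hψ⟩ : ∃ ψ : Multiplicative ℤ →* Multiplicative ℤ,
      rightHom.comp φ.toMonoidHom = ψ.comp rightHom :=
    ⟨_, eq_comp_rightHom_of_comp_inl_eq_one _ (hvanish _)⟩
  have hψ_surj : Function.Surjective ψ := fun y => by
    obtain ⟨x, hx⟩ := φ.surjective (inr y)
    refine ⟨rightHom x, ?_⟩
    rw [← MonoidHom.comp_apply, ← hψ, MonoidHom.comp_apply, MulEquiv.coe_toMonoidHom, hx,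
      rightHom_inr]
  rcases ψ.eq_id_or_eq_invMonoidHom_of_surjective hψ_surj with hid | hinv
  · exact infinite_quotient_twistedSetoid_of_comp_eq _ rightHom rightHom_surjective
      (by rw [hψ, hid]; rfl)
  · obtain ⟨M, hM, hAMA⟩ := exists_mul_mul_eq_of_right_map_inr_eq he φ hφ hφ'
      (by simpa [hinv] using DFunLike.congr_fun hψ (inr (Multiplicative.ofAdd 1)))
    exact absurd ((det_one_sub_eq_zero_or_det_one_add_eq_zero_of_mul_mul_eq hn hM hAMA).elim h1 h2)
      id

end

/-- If `A ∈ GL₃(ℤ)` has no eigenvalue `1` or `-1` (i.e. `det(I - A) ≠ 0` and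
`det(I + A) ≠ 0`), then no `M ∈ GL₃(ℤ)` satisfies `M A = A⁻¹ M`, and `ℤ³ ⋊_A ℤ` has
the `R∞` property. -/
theorem rinf_Z3_no_eigenvalue_pm_one (A : Matrix (Fin 3) (Fin 3) ℤ)
    (hA : IsUnit A.det) (h1 : (1 - A).det ≠ 0) (h2 : (1 + A).det ≠ 0)
    (e : (Fin 3 → ℤ) ≃+ (Fin 3 → ℤ)) (he : ∀ v, e v = A.mulVec v) :
    (¬ ∃ M : Matrix (Fin 3) (Fin 3) ℤ, IsUnit M.det ∧ M * A = A⁻¹ * M) ∧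
    hasRinf (Multiplicative (Fin 3 → ℤ) ⋊[zAction e] Multiplicative ℤ) := by
  have hodd : Odd (Fintype.card (Fin 3)) := by decide
  refine ⟨fun ⟨M, hM, hMA⟩ => ?_, hasRinf_semidirectProduct_zAction hodd he h1 h2⟩
  have hAMA : A * M * A = M := by rw [mul_assoc, hMA, mul_nonsing_inv_cancel_left _ _ hA]
  exact (det_one_sub_eq_zero_or_det_one_add_eq_zero_of_mul_mul_eq hodd hM hAMA).elim h1 h2
end

section
/- Let α: ℤ² → GL₂(ℤ) be a group homomorphism. Then α is not injective; equivalently, GL₂(ℤ) contains no subgroup isomorphic to ℤ². -/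
/-!
Scalar units of `M₂(ℤ)` square to `1`, so by torsion-freeness the image `A` of the first
generator is non-scalar: `A = c + k N` with `N` non-scalar modulo every prime, and the centralizer
of `A` in `M₂(ℤ)` is `ℤ[N]`. Every `g ∈ GL₂(ℤ)` satisfies `g⁶ ≡ 1 (mod 2)` because `GL₂(𝔽₂)` has
order 6, so for `g` commuting with `A`, `g⁶` lies in `ℤ + 2ℤ[N] ⊆ ℤ[M]`, where `M = 2N - tr N`
squares to `d = disc N`; as `det g⁶ = 1`, this makes `g⁶` the image of a solution of
`x² - d y² = 1`. The group of these solutions is finite or `±(infinite cyclic)` (by Pell's theorem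
when `d` is a positive non-square), so its fourth powers lie in a cyclic group, which forces a
relation between the images of the two generators.
-/

theorem exists_zpow_mul_zpow_eq_one_of_pow_mem_zpowers {G : Type*} [CommGroup G] {c : G} {k : ℕ}
    (hk : k ≠ 0) (h : ∀ a : G, a ^ k ∈ Subgroup.zpowers c) (a b : G) :
    ∃ m n : ℤ, (m, n) ≠ (0, 0) ∧ a ^ m * b ^ n = 1 := by
  obtain ⟨i, hi⟩ := Subgroup.mem_zpowers_iff.mp (h a)
  obtain ⟨j, hj⟩ := Subgroup.mem_zpowers_iff.mp (h b)
  by_cases hi0 : i = 0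
  · refine ⟨k, 0, by simp [hk], ?_⟩
    rw [zpow_natCast, ← hi, hi0, zpow_zero, zpow_zero, one_mul]
  refine ⟨k * j, -(k * i), by simp [hk, hi0], ?_⟩
  rw [zpow_mul, zpow_neg, zpow_mul, zpow_natCast, zpow_natCast, ← hi, ← hj, ← zpow_mul,
    ← zpow_mul, mul_comm i j, mul_inv_cancel]

namespace Pell.Solution₁

variable {d : ℤ}

theorem pow_four_eq_one_of_y_eq_zero {a : Solution₁ d} (ha : a.y = 0) : a ^ 4 = 1 := by
  rcases eq_one_or_neg_one_iff_y_eq_zero.mpr ha with rfl | rfl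
  · exact one_pow 4
  · exact Even.neg_one_pow ⟨2, rfl⟩

theorem pow_four_eq_one_of_d_neg (hd : d < 0) (a : Solution₁ d) : a ^ 4 = 1 := by
  rcases eq_zero_of_d_neg hd a with hx | hy
  · have hsq : a ^ 2 = -1 := by
      ext
      · rw [sq, x_mul, x_neg, x_one, hx]
        linear_combination -a.prop_x + a.x * hx
      · rw [sq, y_mul, y_neg, y_one, hx]
        ring
    rw [show 4 = 2 * 2 from rfl, pow_mul, hsq, neg_one_sq]
  · exact pow_four_eq_one_of_y_eq_zero hy

theorem pow_four_eq_one_of_isSquare (hd : 0 < d) (hsq : IsSquare d) (a : Solution₁ d) :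
    a ^ 4 = 1 := by
  have hx : a.x ^ 2 = 1 := by
    have h1 : ¬ 1 < a.x := fun h => d_nonsquare_of_one_lt_x h hsq
    have h2 : ¬ 1 < (-a).x := fun h => d_nonsquare_of_one_lt_x h hsq
    rw [x_neg] at h2
    have h0 := x_ne_zero hd.le a
    obtain h | h : a.x = 1 ∨ a.x = -1 := by omega
    all_goals simp [h]
  apply pow_four_eq_one_of_y_eq_zero
  have := a.prop_y
  rw [hx, sub_self] at this
  exact pow_eq_zero_iff two_ne_zero |>.mp ((mul_eq_zero.mp this).resolve_left hd.ne')

theorem zpow_mk_one_one (n : ℤ) :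
    (mk 1 1 (by ring) : Solution₁ 0) ^ n = mk 1 n (by ring) := by
  induction n using Int.induction_on with
  | zero => ext <;> simp
  | succ k ih => rw [zpow_add_one, ih]; ext <;> simp [x_mul, y_mul, add_comm]
  | pred k ih => rw [zpow_sub_one, ih]; ext <;> simp [x_mul, y_mul, x_inv, y_inv]; ring

theorem sq_mem_zpowers_mk_one_one (a : Solution₁ 0) :
    a ^ 2 ∈ Subgroup.zpowers (mk 1 1 (by ring) : Solution₁ 0) := by
  refine Subgroup.mem_zpowers_iff.mpr ⟨2 * a.x * a.y, ?_⟩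
  rw [zpow_mk_one_one]
  ext
  · rw [x_mk, sq, x_mul]
    linear_combination -a.prop
  · rw [y_mk, sq, y_mul]
    ring

theorem exists_pow_four_mem_zpowers (d : ℤ) :
    ∃ c : Solution₁ d, ∀ a : Solution₁ d, a ^ 4 ∈ Subgroup.zpowers c := by
  rcases lt_trichotomy d 0 with hneg | rfl | hpos
  · exact ⟨1, fun a => by rw [pow_four_eq_one_of_d_neg hneg a]; exact one_mem _⟩
  · refine ⟨mk 1 1 (by ring), fun a => ?_⟩
    rw [show 4 = 2 * 2 from rfl, pow_mul]
    exact pow_mem (sq_mem_zpowers_mk_one_one a) 2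
  by_cases hsq : IsSquare d
  · exact ⟨1, fun a => by rw [pow_four_eq_one_of_isSquare hpos hsq a]; exact one_mem _⟩
  obtain ⟨a₁, ha₁⟩ := IsFundamental.exists_of_not_isSquare hpos hsq
  refine ⟨a₁, fun a => ?_⟩
  obtain ⟨n, rfl | rfl⟩ := ha₁.eq_zpow_or_neg_zpow a
  · exact pow_mem (zpow_mem (Subgroup.mem_zpowers a₁) n) 4
  · rw [Even.neg_pow ⟨2, rfl⟩]
    exact pow_mem (zpow_mem (Subgroup.mem_zpowers a₁) n) 4

end Pell.Solution₁

namespace Matrix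

section CommRing

variable {R : Type*} [CommRing R]

/-- `N` remains non-scalar modulo every maximal ideal of `R`. -/
def IsNowhereScalar (N : Matrix (Fin 2) (Fin 2) R) : Prop :=
  ∃ x y z : R, x * N 0 1 + y * N 1 0 + z * (N 1 1 - N 0 0) = 1

theorem IsNowhereScalar.exists_eq_smul_one_add_smul_of_commute {N B : Matrix (Fin 2) (Fin 2) R}
    (hN : N.IsNowhereScalar) (h : Commute N B) : ∃ u v : R, B = u • 1 + v • N := by
  obtain ⟨x, y, z, hxyz⟩ := hN
  have h00 := congrFun (congrFun h.eq 0) 0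
  have h01 := congrFun (congrFun h.eq 0) 1
  have h10 := congrFun (congrFun h.eq 1) 0
  simp only [mul_apply, Fin.sum_univ_two] at h00 h01 h10
  -- commuting with `N` makes `(B 0 1, B 1 0, B 1 1 - B 0 0)` proportional to
  -- `(N 0 1, N 1 0, N 1 1 - N 0 0)`, and the Bézout relation produces the factor
  set v := x * B 0 1 + y * B 1 0 + z * (B 1 1 - B 0 0)
  refine ⟨B 0 0 - v * N 0 0, v, ?_⟩
  ext i j
  fin_cases i <;> fin_cases j <;>
    simp only [Fin.zero_eta, Fin.mk_one, Fin.isValue, add_apply, smul_apply, smul_eq_mul,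
      one_apply_eq, one_apply_ne zero_ne_one, one_apply_ne one_ne_zero]
  · ring
  · linear_combination (-B 0 1) * hxyz - y * h00 - z * h01
  · linear_combination (-B 1 0) * hxyz + x * h00 + z * h10
  · linear_combination (B 0 0 - B 1 1) * hxyz + x * h01 - y * h10

theorem det_smul_one_add_smul (M : Matrix (Fin 2) (Fin 2) R) (x y : R) :
    (x • 1 + y • M).det = x ^ 2 + x * y * M.trace + y ^ 2 * M.det := by
  rw [det_fin_two, det_fin_two, trace_fin_two]
  simp only [add_apply, smul_apply, smul_eq_mul, one_apply_eq, one_apply_ne zero_ne_one,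
    one_apply_ne one_ne_zero]
  ring

theorem mul_self_eq_neg_det_smul_one {M : Matrix (Fin 2) (Fin 2) R} (hM : M.trace = 0) :
    M * M = (-M.det) • 1 := by
  rw [trace_fin_two] at hM
  ext i j
  fin_cases i <;> fin_cases j <;>
    simp only [Fin.zero_eta, Fin.mk_one, Fin.isValue, mul_apply, Fin.sum_univ_two, det_fin_two,
      smul_apply, smul_eq_mul, one_apply_eq, one_apply_ne zero_ne_one, one_apply_ne one_ne_zero]
  · linear_combination M 0 0 * hM
  · linear_combination M 0 1 * hM
  · linear_combination M 1 0 * hM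
  · linear_combination M 1 1 * hM

theorem trace_two_smul_sub_trace_smul_one (N : Matrix (Fin 2) (Fin 2) R) :
    ((2 : R) • N - N.trace • 1).trace = 0 := by
  rw [trace_sub, trace_smul, trace_smul, trace_one, Fintype.card_fin, smul_eq_mul, smul_eq_mul]
  ring

end CommRing

theorem sq_eq_one_of_isUnit_of_mem_range_scalar {n : Type*} [Fintype n] [DecidableEq n]
    [Nonempty n] {A : Matrix n n ℤ} (hA : IsUnit A) (hs : A ∈ Set.range (scalar n)) :
    A ^ 2 = 1 := by
  obtain ⟨c, rfl⟩ := hs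
  have hc : IsUnit c := by
    have := hA.map (detMonoidHom : Matrix n n ℤ →* ℤ)
    rw [coe_detMonoidHom, scalar_apply, det_diagonal, Finset.prod_const] at this
    exact (isUnit_pow_iff Finset.univ_nonempty.card_pos.ne').mp this
  rw [← map_pow, Int.isUnit_sq hc, map_one]

theorem exists_eq_smul_one_add_smul_isNowhereScalar {A : Matrix (Fin 2) (Fin 2) ℤ}
    (hA : A ∉ Set.range (scalar (Fin 2))) :
    ∃ (k : ℤ) (N : Matrix (Fin 2) (Fin 2) ℤ), k ≠ 0 ∧ A = A 0 0 • 1 + k • N ∧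
      N.IsNowhereScalar := by
  set g : ℤ := ((Int.gcd (Int.gcd (A 0 1) (A 1 0)) (A 1 1 - A 0 0) : ℕ) : ℤ)
  obtain ⟨p, hp⟩ : g ∣ A 0 1 := (Int.gcd_dvd_left _ _).trans (Int.gcd_dvd_left _ _)
  obtain ⟨q, hq⟩ : g ∣ A 1 0 := (Int.gcd_dvd_left _ _).trans (Int.gcd_dvd_right _ _)
  obtain ⟨r, hr⟩ : g ∣ A 1 1 - A 0 0 := Int.gcd_dvd_right _ _
  have hg : g ≠ 0 := by
    intro hg
    rw [hg, zero_mul] at hp hq hr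
    refine hA ⟨A 0 0, ?_⟩
    ext i j
    fin_cases i <;> fin_cases j <;> simp [intCast_apply, hp, hq, sub_eq_zero.mp hr]
  refine ⟨g, !![0, p; q, r], hg, ?_, ?_⟩
  · ext i j
    fin_cases i <;> fin_cases j <;> simp [intCast_apply, ← hp, ← hq, ← hr]
  · have h₁ := Int.gcd_eq_gcd_ab (A 0 1) (A 1 0)
    have h₂ := Int.gcd_eq_gcd_ab (Int.gcd (A 0 1) (A 1 0)) (A 1 1 - A 0 0)
    set a := Int.gcdA (A 0 1) (A 1 0)
    set b := Int.gcdB (A 0 1) (A 1 0)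
    set c := Int.gcdA (Int.gcd (A 0 1) (A 1 0)) (A 1 1 - A 0 0)
    set e := Int.gcdB (Int.gcd (A 0 1) (A 1 0)) (A 1 1 - A 0 0)
    refine ⟨a * c, b * c, e, mul_left_cancel₀ hg ?_⟩
    simp only [of_apply, cons_val', cons_val_zero, cons_val_one, empty_val', cons_val_fin_one]
    linear_combination -h₂ - c * h₁ - (a * c) * hp - (b * c) * hq - e * hr

theorem exists_eq_smul_of_map_intCast_eq_zero {n : Type*} {m : ℕ} {M : Matrix n n ℤ}
    (hM : M.map (Int.cast : ℤ → ZMod m) = 0) : ∃ h : Matrix n n ℤ, M = (m : ℤ) • h := by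
  have hdvd : ∀ i j, (m : ℤ) ∣ M i j := fun i j =>
    (ZMod.intCast_zmod_eq_zero_iff_dvd _ m).mp (congrFun (congrFun hM i) j)
  choose h hh using hdvd
  exact ⟨of h, by ext i j; simp [hh]⟩

theorem GeneralLinearGroup.natCard_fin_two_zmod_two : Nat.card (GL (Fin 2) (ZMod 2)) = 6 := by
  rw [card_GL_field]
  simp [Fin.prod_univ_two]

theorem GeneralLinearGroup.exists_pow_six_eq_one_add_two_smul (g : GL (Fin 2) ℤ) :
    ∃ h : Matrix (Fin 2) (Fin 2) ℤ, ((g ^ 6 : GL (Fin 2) ℤ) : Matrix (Fin 2) (Fin 2) ℤ) =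
      1 + (2 : ℤ) • h := by
  let reduce : Matrix (Fin 2) (Fin 2) ℤ →+* Matrix (Fin 2) (Fin 2) (ZMod 2) :=
    (Int.castRingHom (ZMod 2)).mapMatrix
  have h6 : Units.map reduce.toMonoidHom (g ^ 6) = 1 := by
    rw [map_pow, ← natCard_fin_two_zmod_two]
    exact pow_card_eq_one'
  obtain ⟨h, hh⟩ := exists_eq_smul_of_map_intCast_eq_zero (m := 2)
    (M := ((g ^ 6 : GL (Fin 2) ℤ) : Matrix (Fin 2) (Fin 2) ℤ) - 1) <| by
      change reduce (_ - 1) = 0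
      rw [map_sub, sub_eq_zero]
      simpa using congrArg Units.val h6
  exact ⟨h, by rw [← sub_eq_iff_eq_add', hh]; rfl⟩

def zsqrtdHom {d : ℤ} {M : Matrix (Fin 2) (Fin 2) ℤ} (hM : M * M = d • 1) :
    ℤ√d →* Matrix (Fin 2) (Fin 2) ℤ where
  toFun z := z.re • 1 + z.im • M
  map_one' := by simp
  map_mul' z w := by
    simp only [Zsqrtd.re_mul, Zsqrtd.im_mul, add_mul, mul_add, smul_mul_smul_comm, mul_one,
      one_mul, hM]
    module

def solution₁Hom {M : Matrix (Fin 2) (Fin 2) ℤ} (hM : M.trace = 0) :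
    Pell.Solution₁ (-M.det) →* GL (Fin 2) ℤ :=
  (Units.map (zsqrtdHom (mul_self_eq_neg_det_smul_one hM))).comp Unitary.toUnits

theorem mem_range_solution₁Hom {M : Matrix (Fin 2) (Fin 2) ℤ} (hM : M.trace = 0)
    {g : GL (Fin 2) ℤ} {x y : ℤ} (hg : (g : Matrix (Fin 2) (Fin 2) ℤ) = x • 1 + y • M)
    (hdet : (g : Matrix (Fin 2) (Fin 2) ℤ).det = 1) : g ∈ (solution₁Hom hM).range := by
  have hxy : x ^ 2 - -M.det * y ^ 2 = 1 := by
    rw [← hdet, hg, det_smul_one_add_smul, hM]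
    ring
  exact ⟨Pell.Solution₁.mk x y hxy, Units.ext hg.symm⟩

theorem GeneralLinearGroup.exists_monoidHom_solution₁_pow_six_mem_range {A : GL (Fin 2) ℤ}
    (hA : (A : Matrix (Fin 2) (Fin 2) ℤ) ∉ Set.range (Matrix.scalar (Fin 2))) :
    ∃ (d : ℤ) (Ψ : Pell.Solution₁ d →* GL (Fin 2) ℤ), ∀ g, Commute A g → g ^ 6 ∈ Ψ.range := by
  obtain ⟨k, N, hk, hAN, hN⟩ := exists_eq_smul_one_add_smul_isNowhereScalar hA
  have hM := trace_two_smul_sub_trace_smul_one N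
  refine ⟨_, solution₁Hom hM, fun g hg => ?_⟩
  obtain ⟨h, hh⟩ := exists_pow_six_eq_one_add_two_smul g
  have hNh : Commute N h := by
    have hcomm := (hg.pow_right 6).units_val.eq
    rw [hh, hAN] at hcomm
    refine smul_right_injective _ (mul_ne_zero hk two_ne_zero) ?_
    simp only [add_mul, mul_add, smul_mul_smul_comm, one_mul, mul_one] at hcomm
    linear_combination (norm := module) hcomm
  obtain ⟨u, v, rfl⟩ := hN.exists_eq_smul_one_add_smul_of_commute hNh
  refine mem_range_solution₁Hom hM (x := 1 + 2 * u + v * N.trace) (y := v) ?_ ?_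
  · rw [hh]
    module
  · rw [Units.val_pow_eq_pow_val, det_pow, show 6 = 2 * 3 from rfl, pow_mul,
      Int.isUnit_sq (isUnits_det_units g), one_pow]

end Matrix

/-- No homomorphism `ℤ² → GL₂(ℤ)` is injective; equivalently, `GL₂(ℤ)` contains no
subgroup isomorphic to `ℤ²`. -/
theorem no_injective_hom_Z2_to_GL2 (α : Multiplicative (ℤ × ℤ) →* (Matrix (Fin 2) (Fin 2) ℤ)ˣ) :
    ¬ Function.Injective α := by
  intro hα
  set A := α (Multiplicative.ofAdd (1, 0))
  set B := α (Multiplicative.ofAdd (0, 1))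
  have hrel : ∀ m n : ℤ, A ^ m * B ^ n = 1 → m = 0 ∧ n = 0 := by
    intro m n h
    have hmn : Multiplicative.ofAdd ((m, n) : ℤ × ℤ) = 1 := hα <| by
      rw [map_one, ← h, show ((m, n) : ℤ × ℤ) = m • (1, 0) + n • (0, 1) by simp, ofAdd_add,
        ofAdd_zsmul, ofAdd_zsmul, map_mul, map_zpow, map_zpow]
    simpa [Prod.ext_iff] using congrArg Multiplicative.toAdd hmn
  by_cases hA : (A : Matrix (Fin 2) (Fin 2) ℤ) ∈ Set.range (Matrix.scalar (Fin 2))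
  · have hA2 : A ^ (2 : ℤ) * B ^ (0 : ℤ) = 1 := by
      rw [zpow_zero, mul_one, zpow_ofNat]
      exact Units.ext (Matrix.sq_eq_one_of_isUnit_of_mem_range_scalar A.isUnit hA)
    exact absurd (hrel 2 0 hA2).1 two_ne_zero
  obtain ⟨d, Ψ, hΨ⟩ := Matrix.GeneralLinearGroup.exists_monoidHom_solution₁_pow_six_mem_range hA
  obtain ⟨a, ha⟩ := hΨ A (Commute.refl A)
  obtain ⟨b, hb⟩ := hΨ B ((Commute.all _ _).map α)
  obtain ⟨c, hc⟩ := Pell.Solution₁.exists_pow_four_mem_zpowers d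
  obtain ⟨m, n, hmn, hab⟩ := exists_zpow_mul_zpow_eq_one_of_pow_mem_zpowers four_ne_zero hc a b
  have h6 := hrel (6 * m) (6 * n) <| by
    rw [zpow_mul, zpow_mul, zpow_ofNat, zpow_ofNat, ← ha, ← hb, ← map_zpow, ← map_zpow,
      ← map_mul, hab, map_one]
  exact hmn (by simpa using h6)
end
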